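/- arXiv:math/0106029 — 4 statements merged into one kernel-verified Lean document; each statement's English description precedes it below -/
import Mathlib

section
/- Consider the ABS recursion starting from H_1 = I with updates H_{k+1} = H_k - H_k a_k p_k^T / δ_k, p_k = H_k^T z_k, δ_k = p_k^T a_k ≠ 0, for k = 1,...,m. Then H_{m+1} a_j = 0 for all j ≤ m. -/
open scoped Matrix

lemma abs_aux_vecMulVec_mulVec (n : ℕ) (u v w : Fin n → ℝ) :
    (Matrix.vecMulVec u v).mulVec w = (v ⬝ᵥ w) • u := by
  ext i
  simp [Matrix.mulVec, Matrix.vecMulVec_apply, dotProduct, Finset.mul_sum,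
    mul_comm, mul_assoc, mul_left_comm]

lemma abs_aux_dot (n : ℕ) (A : Matrix (Fin n) (Fin n) ℝ) (z x : Fin n → ℝ) :
    A.transpose.mulVec z ⬝ᵥ x = z ⬝ᵥ A.mulVec x := by
  rw [Matrix.mulVec_transpose, Matrix.dotProduct_mulVec]

/-- In the ABS recursion starting from `H₁ = I`, the matrix `H_{m+1}`
annihilates all previously processed rows: `H_{m+1} aⱼ = 0` for `1 ≤ j ≤ m`. -/
theorem abs_recursion_annihilates_all (n m : ℕ)
    (H : ℕ → Matrix (Fin n) (Fin n) ℝ) (a z p : ℕ → (Fin n → ℝ))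
    (hH1 : H 1 = 1)
    (hp : ∀ k, 1 ≤ k → k ≤ m → p k = (H k).transpose.mulVec (z k))
    (hδ : ∀ k, 1 ≤ k → k ≤ m → p k ⬝ᵥ a k ≠ 0)
    (hrec : ∀ k, 1 ≤ k → k ≤ m →
      H (k + 1) = H k - (p k ⬝ᵥ a k)⁻¹ • Matrix.vecMulVec ((H k).mulVec (a k)) (p k)) :
    ∀ j, 1 ≤ j → j ≤ m → (H (m + 1)).mulVec (a j) = 0 := by
  suffices h : ∀ k, k ≤ m → ∀ j, 1 ≤ j → j ≤ k → (H (k + 1)).mulVec (a j) = 0 by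
    intro j h1 h2; exact h m le_rfl j h1 h2
  intro k
  induction k with
  | zero => intro _ j h1 h2; omega
  | succ k ih =>
    intro hkm j h1 h2
    have hk1 : 1 ≤ k + 1 := Nat.le_add_left 1 k
    have hrec' := hrec (k + 1) hk1 hkm
    rw [hrec', Matrix.sub_mulVec, Matrix.smul_mulVec,
      abs_aux_vecMulVec_mulVec]
    rcases eq_or_lt_of_le h2 with hjk | hjk
    · subst hjk
      rw [smul_smul, inv_mul_cancel₀ (hδ (k + 1) hk1 hkm), one_smul, sub_self]
    · -- j ≤ k
      have hjk' : j ≤ k := by omega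
      have hz : (H (k + 1)).mulVec (a j) = 0 := ih (by omega) j h1 hjk'
      have hpd : p (k + 1) ⬝ᵥ a j = 0 := by
        rw [hp (k + 1) hk1 hkm, abs_aux_dot, hz, dotProduct_zero]
      rw [hz, hpd, zero_smul, smul_zero, sub_zero]
end

section
/- In the ABS recursion from H_1 = I, the search vectors satisfy p_k^T a_j = 0 for all j < k (implicit orthogonality of p_k to previously processed rows). -/
open scoped Matrix


private lemma vecMulVec_mulVec' {n : ℕ} (u v w : Fin n → ℝ) :
    Matrix.vecMulVec u v *ᵥ w = (v ⬝ᵥ w) • u := by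
  ext i
  simp only [Matrix.mulVec, Matrix.vecMulVec_apply, dotProduct, Pi.smul_apply,
    smul_eq_mul, Finset.sum_mul, Finset.mul_sum]
  exact Finset.sum_congr rfl (fun x _ => by ring)


/-- In the ABS recursion from `H₁ = I`, the search vectors satisfy
`pₖᵀ aⱼ = 0` for all `j < k` (implicit orthogonality). -/
theorem abs_search_vectors_orthogonal (n m : ℕ)
    (H : ℕ → Matrix (Fin n) (Fin n) ℝ) (a z p : ℕ → (Fin n → ℝ))
    (hH1 : H 1 = 1)
    (hp : ∀ k, 1 ≤ k → k ≤ m → p k = (H k).transpose.mulVec (z k))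
    (hδ : ∀ k, 1 ≤ k → k ≤ m → p k ⬝ᵥ a k ≠ 0)
    (hrec : ∀ k, 1 ≤ k → k ≤ m →
      H (k + 1) = H k - (p k ⬝ᵥ a k)⁻¹ • Matrix.vecMulVec ((H k).mulVec (a k)) (p k)) :
    ∀ k j, 1 ≤ j → j < k → k ≤ m → p k ⬝ᵥ a j = 0 := by
  -- key: H k annihilates earlier a j
  have key : ∀ k, ∀ j, 1 ≤ j → j < k → k ≤ m + 1 → (H k).mulVec (a j) = 0 := by
    intro k
    induction k with
    | zero => intro j hj hjk; omega
    | succ k ih =>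
      intro j hj hjk hkm
      have hk1 : 1 ≤ k := by omega
      have hkm' : k ≤ m := by omega
      rw [hrec k hk1 hkm']
      have hHk : ∀ i, 1 ≤ i → i < k → (H k).mulVec (a i) = 0 := fun i h1 h2 =>
        ih i h1 h2 (by omega)
      rw [Matrix.sub_mulVec, Matrix.smul_mulVec]
      rcases lt_or_eq_of_le (Nat.lt_succ_iff.mp hjk) with h | h
      · have h0 := hHk j hj h
        have hpj : p k ⬝ᵥ a j = 0 := by
          rw [hp k hk1 hkm', Matrix.mulVec_transpose, ← Matrix.dotProduct_mulVec, h0,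
            dotProduct_zero]
        rw [h0, vecMulVec_mulVec', hpj]
        simp
      · subst h
        rw [vecMulVec_mulVec' (H j *ᵥ a j) (p j) (a j)]
        rw [smul_smul, inv_mul_cancel₀ (hδ j hk1 hkm'), one_smul, sub_self]
  intro k j hj hjk hkm
  have hk1 : 1 ≤ k := by omega
  rw [hp k hk1 hkm, Matrix.mulVec_transpose, ← Matrix.dotProduct_mulVec,
    key k j hj hjk (by omega), dotProduct_zero]
end

section
/- In the ABS iteration y_{k+1} = y_k - (f_k(y_k)/δ_k) p_k applied to a linear system a_j^T x = b_j (so f_j(x) = a_j^T x - b_j), after step k the iterate satisfies all equations processed so far: a_j^T y_{k+1} = b_j for all j ≤ k. -/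
open Matrix

/-!
The update matrices `H_{k+1}` annihilate `a_1, …, a_k`, so the search direction
`p_{k+1} = H_{k+1}ᵀ z_{k+1}` is orthogonal to every processed `a_j`. Hence the step
`y_{k+1} ↦ y_{k+2}` keeps `a_jᵀ y` fixed for `j ≤ k`, while it is built to solve the
new equation `a_{k+1}ᵀ y = b_{k+1}`.
-/

section ABS

variable {K ι : Type*} [Field K] [Fintype ι]

def absUpdate (H : Matrix ι ι K) (a p : ι → K) : Matrix ι ι K :=
  H - (p ⬝ᵥ a)⁻¹ • vecMulVec (H *ᵥ a) p

def absStep (y a : ι → K) (β : K) (p : ι → K) : ι → K :=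
  y - ((a ⬝ᵥ y - β) / (p ⬝ᵥ a)) • p

theorem absUpdate_mulVec (H : Matrix ι ι K) (a p c : ι → K) :
    absUpdate H a p *ᵥ c = H *ᵥ c - ((p ⬝ᵥ a)⁻¹ * (p ⬝ᵥ c)) • H *ᵥ a := by
  rw [absUpdate, sub_mulVec, smul_mulVec, vecMulVec_mulVec, op_smul_eq_smul, smul_smul]

theorem transpose_mulVec_dotProduct_eq_zero {H : Matrix ι ι K} {c : ι → K}
    (hc : H *ᵥ c = 0) (z : ι → K) : Hᵀ *ᵥ z ⬝ᵥ c = 0 := by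
  rw [mulVec_transpose, ← dotProduct_mulVec, hc, dotProduct_zero]

theorem absUpdate_mulVec_self (H : Matrix ι ι K) {a p : ι → K} (hδ : p ⬝ᵥ a ≠ 0) :
    absUpdate H a p *ᵥ a = 0 := by
  rw [absUpdate_mulVec, inv_mul_cancel₀ hδ, one_smul, sub_self]

theorem absUpdate_transpose_mulVec_of_mulVec_eq_zero {H : Matrix ι ι K} {c : ι → K}
    (hc : H *ᵥ c = 0) (a z : ι → K) : absUpdate H a (Hᵀ *ᵥ z) *ᵥ c = 0 := by
  rw [absUpdate_mulVec, hc, transpose_mulVec_dotProduct_eq_zero hc, mul_zero, zero_smul,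
    sub_zero]

theorem dotProduct_absStep_self (y a : ι → K) (β : K) {p : ι → K} (hδ : p ⬝ᵥ a ≠ 0) :
    a ⬝ᵥ absStep y a β p = β := by
  rw [absStep, dotProduct_sub, dotProduct_smul, smul_eq_mul, dotProduct_comm a p,
    div_mul_cancel₀ _ hδ, sub_sub_cancel]

theorem dotProduct_absStep_of_dotProduct_eq_zero (y a : ι → K) (β : K) {p c : ι → K}
    (hc : p ⬝ᵥ c = 0) : c ⬝ᵥ absStep y a β p = c ⬝ᵥ y := by
  rw [absStep, dotProduct_sub, dotProduct_smul, dotProduct_comm c p, hc, smul_zero, sub_zero]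

theorem abs_update_mulVec_processed_eq_zero (m : ℕ)
    (H : ℕ → Matrix ι ι K) (a z p : ℕ → ι → K)
    (hp : ∀ k, 1 ≤ k → k ≤ m → p k = (H k)ᵀ *ᵥ z k)
    (hδ : ∀ k, 1 ≤ k → k ≤ m → p k ⬝ᵥ a k ≠ 0)
    (hrec : ∀ k, 1 ≤ k → k ≤ m → H (k + 1) = absUpdate (H k) (a k) (p k)) :
    ∀ k ≤ m, ∀ j, 1 ≤ j → j ≤ k → H (k + 1) *ᵥ a j = 0 := by
  intro k
  induction k with
  | zero => omega
  | succ k ih =>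
    intro hkm j hj1 hjk
    rw [hrec (k + 1) (by omega) hkm]
    rcases eq_or_lt_of_le hjk with rfl | hjk
    · exact absUpdate_mulVec_self _ (hδ (k + 1) hj1 hkm)
    · rw [hp (k + 1) (by omega) hkm]
      exact absUpdate_transpose_mulVec_of_mulVec_eq_zero (ih (by omega) j hj1 (by omega)) _ _

theorem abs_iterate_dotProduct_processed_eq (m : ℕ)
    (H : ℕ → Matrix ι ι K) (a z p y : ℕ → ι → K) (b : ℕ → K)
    (hp : ∀ k, 1 ≤ k → k ≤ m → p k = (H k)ᵀ *ᵥ z k)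
    (hδ : ∀ k, 1 ≤ k → k ≤ m → p k ⬝ᵥ a k ≠ 0)
    (hrec : ∀ k, 1 ≤ k → k ≤ m → H (k + 1) = absUpdate (H k) (a k) (p k))
    (hy : ∀ k, 1 ≤ k → k ≤ m → y (k + 1) = absStep (y k) (a k) (b k) (p k)) :
    ∀ k ≤ m, ∀ j, 1 ≤ j → j ≤ k → a j ⬝ᵥ y (k + 1) = b j := by
  intro k
  induction k with
  | zero => omega
  | succ k ih =>
    intro hkm j hj1 hjk
    rw [hy (k + 1) (by omega) hkm]
    rcases eq_or_lt_of_le hjk with rfl | hjk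
    · exact dotProduct_absStep_self _ _ _ (hδ (k + 1) hj1 hkm)
    · have hHj := abs_update_mulVec_processed_eq_zero m H a z p hp hδ hrec k (by omega) j hj1
        (by omega)
      have hpj : p (k + 1) ⬝ᵥ a j = 0 := by
        rw [hp (k + 1) (by omega) hkm]
        exact transpose_mulVec_dotProduct_eq_zero hHj _
      rw [dotProduct_absStep_of_dotProduct_eq_zero _ _ _ hpj]
      exact ih (by omega) j hj1 (by omega)

end ABS

theorem abs_iterate_satisfies_processed_equations_general (n m : ℕ)
    (H : ℕ → Matrix (Fin n) (Fin n) ℝ) (a z p y : ℕ → (Fin n → ℝ)) (b : ℕ → ℝ)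
    (hp : ∀ k, 1 ≤ k → k ≤ m → p k = (H k).transpose.mulVec (z k))
    (hδ : ∀ k, 1 ≤ k → k ≤ m → p k ⬝ᵥ a k ≠ 0)
    (hrec : ∀ k, 1 ≤ k → k ≤ m →
      H (k + 1) = H k - (p k ⬝ᵥ a k)⁻¹ • Matrix.vecMulVec ((H k).mulVec (a k)) (p k))
    (hy : ∀ k, 1 ≤ k → k ≤ m →
      y (k + 1) = y k - ((a k ⬝ᵥ y k - b k) / (p k ⬝ᵥ a k)) • p k) :
    ∀ k, 1 ≤ k → k ≤ m → ∀ j, 1 ≤ j → j ≤ k → a j ⬝ᵥ y (k + 1) = b j :=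
  fun k _ hkm ↦ abs_iterate_dotProduct_processed_eq m H a z p y b hp hδ hrec hy k hkm

/-- In the ABS iteration applied to the linear system `aⱼᵀ x = bⱼ`, after
step `k` the iterate satisfies all equations processed so far:
`aⱼᵀ y_{k+1} = bⱼ` for all `j ≤ k`. -/
theorem abs_iterate_satisfies_processed_equations (n m : ℕ)
    (H : ℕ → Matrix (Fin n) (Fin n) ℝ) (a z p y : ℕ → (Fin n → ℝ)) (b : ℕ → ℝ)
    (hH1 : H 1 = 1)
    (hp : ∀ k, 1 ≤ k → k ≤ m → p k = (H k).transpose.mulVec (z k))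
    (hδ : ∀ k, 1 ≤ k → k ≤ m → p k ⬝ᵥ a k ≠ 0)
    (hrec : ∀ k, 1 ≤ k → k ≤ m →
      H (k + 1) = H k - (p k ⬝ᵥ a k)⁻¹ • Matrix.vecMulVec ((H k).mulVec (a k)) (p k))
    (hy : ∀ k, 1 ≤ k → k ≤ m →
      y (k + 1) = y k - ((a k ⬝ᵥ y k - b k) / (p k ⬝ᵥ a k)) • p k) :
    ∀ k, 1 ≤ k → k ≤ m → ∀ j, 1 ≤ j → j ≤ k → a j ⬝ᵥ y (k + 1) = b j :=
  abs_iterate_satisfies_processed_equations_general n m H a z p y b hp hδ hrec hy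
end

section
/- For an affine map F(x) = Jx - b with J nonsingular, one major ABS iteration (with any parameter vectors z_k giving δ_k ≠ 0 at each step) computes the exact solution: the final iterate y_{n+1} satisfies F(y_{n+1}) = 0. -/
open scoped Matrix

lemma vecMulVec_mulVec_aux {n : ℕ} (u v w : Fin n → ℝ) :
    (Matrix.vecMulVec u v).mulVec w = (v ⬝ᵥ w) • u := by
  funext i
  simp only [Matrix.mulVec, Matrix.vecMulVec, dotProduct, Matrix.of_apply,
    Pi.smul_apply, smul_eq_mul, Finset.mul_sum]
  rw [Finset.sum_mul]
  exact Finset.sum_congr rfl fun j _ => by ring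

/-- For an affine map `F(x) = Jx - b` with `J` nonsingular, one major ABS
iteration (with parameters `z_k` giving `δ_k ≠ 0`) computes the exact
solution: `F(y_{n+1}) = 0`. -/
theorem abs_major_iteration_solves_linear (n : ℕ) (J : Matrix (Fin n) (Fin n) ℝ)
    (hJ : IsUnit J.det) (bv : Fin n → ℝ)
    (H : ℕ → Matrix (Fin n) (Fin n) ℝ) (a z p y : ℕ → (Fin n → ℝ)) (b : ℕ → ℝ)
    (ha : ∀ i : Fin n, a ((i : ℕ) + 1) = J i)
    (hb : ∀ i : Fin n, b ((i : ℕ) + 1) = bv i)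
    (hH1 : H 1 = 1)
    (hp : ∀ k, 1 ≤ k → k ≤ n → p k = (H k).transpose.mulVec (z k))
    (hδ : ∀ k, 1 ≤ k → k ≤ n → p k ⬝ᵥ a k ≠ 0)
    (hrec : ∀ k, 1 ≤ k → k ≤ n →
      H (k + 1) = H k - (p k ⬝ᵥ a k)⁻¹ • Matrix.vecMulVec ((H k).mulVec (a k)) (p k))
    (hy : ∀ k, 1 ≤ k → k ≤ n →
      y (k + 1) = y k - ((a k ⬝ᵥ y k - b k) / (p k ⬝ᵥ a k)) • p k) :
    J.mulVec (y (n + 1)) - bv = 0 := by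
  -- orthogonality of p k to earlier rows given H k kills them
  have hpa : ∀ k, 1 ≤ k → k ≤ n → ∀ j, (H k).mulVec (a j) = 0 → p k ⬝ᵥ a j = 0 := by
    intro k hk1 hkn j h0
    rw [hp k hk1 hkn, Matrix.mulVec_transpose, ← Matrix.dotProduct_mulVec, h0,
      dotProduct_zero]
  -- H k annihilates earlier rows
  have hHzero : ∀ k, 1 ≤ k → k ≤ n + 1 → ∀ j, 1 ≤ j → j < k → (H k).mulVec (a j) = 0 := by
    intro k hk1
    induction k, hk1 using Nat.le_induction with
    | base => intro _ j hj1 hj; omega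
    | succ k hk ih =>
      intro hkn j hj1 hjk
      have hkn' : k ≤ n := by omega
      rw [hrec k hk hkn', Matrix.sub_mulVec, Matrix.smul_mulVec,
        vecMulVec_mulVec_aux]
      rcases eq_or_lt_of_le (Nat.lt_succ_iff.mp hjk) with h | h
      · subst h
        rw [smul_smul, inv_mul_cancel₀ (hδ j hk hkn'), one_smul, sub_self]
      · have h0 : (H k).mulVec (a j) = 0 := ih (by omega) j hj1 h
        rw [h0, hpa k hk hkn' j h0, zero_smul, smul_zero, sub_zero]
  -- the iterates satisfy all processed equations
  have hsolve : ∀ k, 1 ≤ k → k ≤ n → ∀ j, 1 ≤ j → j ≤ k → a j ⬝ᵥ y (k + 1) = b j := by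
    intro k hk1
    induction k, hk1 using Nat.le_induction with
    | base =>
      intro hn j hj1 hj
      have hj1' : j = 1 := by omega
      subst hj1'
      rw [hy 1 le_rfl hn, dotProduct_sub, dotProduct_smul,
        dotProduct_comm (a 1) (p 1), smul_eq_mul,
        div_mul_cancel₀ _ (hδ 1 le_rfl hn)]
      ring
    | succ k hk ih =>
      intro hkn j hj1 hj
      have hkn' : k ≤ n := by omega
      rw [hy (k+1) (by omega) hkn, dotProduct_sub, dotProduct_smul,
        dotProduct_comm (a j) (p (k+1)), smul_eq_mul]
      rcases eq_or_lt_of_le hj with h | h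
      · subst h
        rw [div_mul_cancel₀ _ (hδ (k+1) (by omega) hkn)]
        ring
      · have hjk : j ≤ k := by omega
        have h0 : (H (k+1)).mulVec (a j) = 0 :=
          hHzero (k+1) (by omega) (by omega) j hj1 (by omega)
        rw [hpa (k+1) (by omega) hkn j h0, ih hkn' j hj1 hjk]
        ring
  funext i
  have hn1 : 1 ≤ n := by have := i.2; omega
  have := hsolve n hn1 le_rfl ((i : ℕ) + 1) (by omega) (by omega)
  rw [ha i, hb i] at this
  simp [Matrix.mulVec, this]
end
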